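/- arXiv:0704.3513 — 2 statements merged into one kernel-verified Lean document; each statement's English description precedes it below -/
import Mathlib

section
/- If a topological group G acts on a topological space M and U ⊆ M is a G-invariant open set admitting a G-equivariant homotopy H : U × [0,1] → M with H₀ the inclusion and H₁(U) contained in a single orbit, then the image of U in the orbit space M/G is categorical in M/G (i.e., the inclusion U/G → M/G is homotopic to a constant map). Consequently cat(M/G) ≤ cat_G(M). -/
open Set MulAction

/-- A set is invariant under the action of `G`. -/
def GInvariant (G : Type*) {M : Type*} [SMul G M] (U : Set M) : Prop :=
  ∀ g : G, ∀ x ∈ U, g • x ∈ U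

/-- `U` is a `G`-categorical subset of `A ⊆ M`: it is relatively open in `A`,
`G`-invariant, and admits a `G`-equivariant homotopy inside `A` starting at the
inclusion and ending in a single `G`-orbit. -/
def GCategoricalOn (G : Type*) {M : Type*} [Monoid G] [MulAction G M]
    [TopologicalSpace M] (A U : Set M) : Prop :=
  (∃ V : Set M, IsOpen V ∧ U = V ∩ A) ∧ GInvariant G U ∧
  ∃ H : C(↥U × ℝ, M),
    (∀ x : ↥U, H (x, 0) = ↑x) ∧
    (∀ (x : ↥U) (t : ℝ), t ∈ Icc (0:ℝ) 1 → H (x, t) ∈ A) ∧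
    (∀ (g : G) (x : ↥U) (hgx : g • (x : M) ∈ U) (t : ℝ),
      H (⟨g • (x : M), hgx⟩, t) = g • H (x, t)) ∧
    ∃ y : M, ∀ x : ↥U, H (x, 1) ∈ MulAction.orbit G y

/-- The equivariant Lusternik–Schnirelmann category of the invariant subset `A`,
as an extended natural number: the least cardinality of a cover of `A` by
`G`-categorical subsets of `A` (`⊤` if there is no such cover). -/
noncomputable def equivCatOn (G : Type*) {M : Type*} [Monoid G] [MulAction G M]
    [TopologicalSpace M] (A : Set M) : ℕ∞ :=
  sInf ((fun 𝒰 : Finset (Set M) => (𝒰.card : ℕ∞)) ''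
    {𝒰 | (∀ U ∈ 𝒰, GCategoricalOn G A U) ∧ A ⊆ ⋃₀ ↑𝒰})

/-- The equivariant Lusternik–Schnirelmann category `cat_G(M)`. -/
noncomputable def equivCat (G M : Type*) [Monoid G] [MulAction G M]
    [TopologicalSpace M] : ℕ∞ :=
  equivCatOn G (Set.univ : Set M)

/-- `U` is a categorical subset of the space `X` in the classical sense of
Lusternik and Schnirelmann. -/
def LSCategorical {X : Type*} [TopologicalSpace X] (U : Set X) : Prop :=
  IsOpen U ∧
  ∃ H : C(↥U × ℝ, X), (∀ x : ↥U, H (x, 0) = ↑x) ∧ ∃ y : X, ∀ x : ↥U, H (x, 1) = y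

/-- The classical Lusternik–Schnirelmann category of a space, counting the sets
of a categorical cover. -/
noncomputable def lsCat (X : Type*) [TopologicalSpace X] : ℕ∞ :=
  sInf ((fun 𝒰 : Finset (Set X) => (𝒰.card : ℕ∞)) ''
    {𝒰 | (∀ U ∈ 𝒰, LSCategorical U) ∧ ⋃₀ (↑𝒰 : Set (Set X)) = Set.univ})


/-!
An equivariant homotopy `H` on a `G`-invariant open set `U` maps orbits to orbits at every
time, so `π ∘ H` is constant on the fibres of `π : U → U/G` and descends to a homotopy on
`U/G × [0,1]`; it starts at the inclusion and ends at the single point `π y`. As `U` is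
saturated, `U/G` is open in `M/G` and `π : U → U/G` is a quotient map, and since `ℝ` is
locally compact so is `π × id`, which makes the descended homotopy continuous. Pushing a
`G`-categorical cover of `M` forward along `π` then gives a categorical cover of `M/G` with
at most as many sets.
-/

namespace Topology.IsQuotientMap

variable {X Y Z T : Type*} [TopologicalSpace X] [TopologicalSpace Y] [TopologicalSpace Z]
  [TopologicalSpace T] {f : X → Y}

theorem isOpen_image_of_preimage_image_eq (hf : IsQuotientMap f) {U : Set X} (hU : IsOpen U)
    (hsat : f ⁻¹' (f '' U) = U) : IsOpen (f '' U) := by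
  rwa [← hf.isOpen_preimage, hsat]

theorem exists_lift_prod [LocallyCompactSpace T] (hf : IsQuotientMap f) {U : Set X}
    (hU : IsOpen U) (hsat : f ⁻¹' (f '' U) = U) (K : C(U × T, Z))
    (hK : ∀ x x' : U, f x = f x' → ∀ t, K (x, t) = K (x', t)) :
    ∃ K' : C(f '' U × T, Z), ∀ (x : U) t, K' (⟨f x, mem_image_of_mem f x.2⟩, t) = K (x, t) := by
  have pick (c : f '' U) : ∃ x : U, f x = c := by
    obtain ⟨_, ⟨x, hx, rfl⟩⟩ := c
    exact ⟨⟨x, hx⟩, rfl⟩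
  have hq := hf.restrictPreimage_isOpen (hf.isOpen_image_of_preimage_image_eq hU hsat)
  let K' (p : f '' U × T) : Z := K ((pick p.1).choose, p.2)
  have hK' : ∀ (x : U) t, K' (⟨f x, mem_image_of_mem f x.2⟩, t) = K (x, t) := fun x t =>
    hK _ x (pick _).choose_spec t
  refine ⟨⟨K', hq.continuous_lift_prod_left ?_⟩, hK'⟩
  have hincl : f ⁻¹' (f '' U) ⊆ U := hsat.le
  convert K.continuous.comp ((continuous_inclusion hincl).prodMap continuous_id) using 1
  funext p
  exact hK' (Set.inclusion hincl p.1) p.2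

end Topology.IsQuotientMap

section OrbitSpace

variable {G M : Type*} [Group G] [MulAction G M]

local notation "π" => Quotient.mk (orbitRel G M)

theorem GInvariant.preimage_image_orbitRel_mk {U : Set M} (hU : GInvariant G U) :
    π ⁻¹' (π '' U) = U := by
  refine Subset.antisymm ?_ (subset_preimage_image _ _)
  rintro x ⟨y, hy, hyx⟩
  obtain ⟨g, rfl⟩ := orbitRel_apply.mp (Quotient.exact hyx.symm)
  exact hU g y hy

variable [TopologicalSpace M]

theorem GCategoricalOn.lsCategorical_image {U : Set M} (h : GCategoricalOn G univ U) :
    LSCategorical (π '' U) := by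
  obtain ⟨⟨V, hV, hUV⟩, hInv, H, hH0, -, hequiv, y, hH1⟩ := h
  have hU : IsOpen U := by rwa [hUV, inter_univ]
  have hsat := hInv.preimage_image_orbitRel_mk
  have hπ : Topology.IsQuotientMap π := isQuotientMap_quot_mk
  let πH : C(U × ℝ, Quotient (orbitRel G M)) := ⟨_, hπ.continuous.comp H.continuous⟩
  have hfib : ∀ x x' : U, π x = π x' → ∀ t, πH (x, t) = πH (x', t) := by
    rintro ⟨x, hx⟩ ⟨x', hx'⟩ hxx' t
    obtain ⟨g, rfl⟩ := orbitRel_apply.mp (Quotient.exact hxx')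
    exact Quotient.sound (orbitRel_apply.mpr ⟨g, (hequiv g ⟨x', hx'⟩ hx t).symm⟩)
  obtain ⟨K, hK⟩ := hπ.exists_lift_prod hU hsat πH hfib
  refine ⟨hπ.isOpen_image_of_preimage_image_eq hU hsat, K, ?_, π y, ?_⟩
  · rintro ⟨_, x, hx, rfl⟩
    simpa [πH, hH0] using hK ⟨x, hx⟩ 0
  · rintro ⟨_, x, hx, rfl⟩
    rw [hK ⟨x, hx⟩ 1]
    exact Quotient.sound (orbitRel_apply.mpr (hH1 ⟨x, hx⟩))

end OrbitSpace

theorem lsCat_le_card {X : Type*} [TopologicalSpace X] {𝒱 : Finset (Set X)}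
    (hcat : ∀ V ∈ 𝒱, LSCategorical V) (hcov : ⋃₀ (𝒱 : Set (Set X)) = univ) :
    lsCat X ≤ 𝒱.card :=
  sInf_le ⟨𝒱, ⟨hcat, hcov⟩, rfl⟩

theorem orbitSpace_cat_le_equivCat_general {G M : Type*} [Group G] [TopologicalSpace M] [MulAction G M] :
    (∀ U : Set M, GCategoricalOn G Set.univ U →
      LSCategorical (Quotient.mk (MulAction.orbitRel G M) '' U)) ∧
    lsCat (Quotient (MulAction.orbitRel G M)) ≤ equivCat G M := by
  classical
  refine ⟨fun U hU => hU.lsCategorical_image, le_sInf ?_⟩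
  rintro _ ⟨𝒰, ⟨hcat, hcov⟩, rfl⟩
  calc lsCat _ ≤ (𝒰.image (Quotient.mk (MulAction.orbitRel G M) '' ·)).card := by
        refine lsCat_le_card ?_ (eq_univ_of_forall ?_)
        · simp only [Finset.mem_image]
          rintro _ ⟨U, hU, rfl⟩
          exact (hcat U hU).lsCategorical_image
        · rintro ⟨x⟩
          obtain ⟨U, hU, hxU⟩ := hcov (mem_univ x)
          exact ⟨_, Finset.mem_image_of_mem _ hU, x, hxU, rfl⟩
    _ ≤ 𝒰.card := by exact_mod_cast Finset.card_image_le

/-- If `U` is a `G`-invariant open set admitting a `G`-equivariant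
homotopy from the inclusion into a single orbit (i.e. `U` is `G`-categorical), then
its image in the orbit space `M/G` is categorical in `M/G`.  Consequently
`cat(M/G) ≤ cat_G(M)`. -/
theorem orbitSpace_cat_le_equivCat {G M : Type*} [Group G] [TopologicalSpace G]
    [IsTopologicalGroup G] [TopologicalSpace M] [MulAction G M] [ContinuousSMul G M] :
    (∀ U : Set M, GCategoricalOn G Set.univ U →
      LSCategorical (Quotient.mk (MulAction.orbitRel G M) '' U)) ∧
    lsCat (Quotient (MulAction.orbitRel G M)) ≤ equivCat G M :=
  orbitSpace_cat_le_equivCat_general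
end

section
/- Let a Lie group G act properly on a manifold M. Then the number of connected components of the fixed point set Fix(G) = {x ∈ M : g·x = x for all g ∈ G} is a lower bound for cat_G(M). -/
open Set MulAction

/-!
A fixed point `x` of a `G`-categorical set `U` stays fixed along the equivariant deformation
`H`, since `H (x, t) = H (g • x, t) = g • H (x, t)`. So `t ↦ H (x, t)` is a path in the fixed set
ending in the orbit of `y`; the orbit of a fixed point is a single point, so it ends at `y`
itself. Hence all fixed points of `U` lie in one component of the fixed set, and a cover by
`k` categorical sets meets at most `k` components.
-/

theorem Set.encard_le_encard_of_exists_rel {α β : Type*} {s : Set α} {t : Set β}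
    (r : α → β → Prop) (hex : ∀ a ∈ s, ∃ b ∈ t, r a b)
    (huniq : ∀ a ∈ s, ∀ a' ∈ s, ∀ b ∈ t, r a b → r a' b → a = a') :
    s.encard ≤ t.encard := by
  choose f hft hrf using hex
  let g : s → t := fun a => ⟨f a a.2, hft a a.2⟩
  have hg : Function.Injective g := fun a a' h => by
    have hfa : f a a.2 = f a' a'.2 := congrArg Subtype.val h
    exact Subtype.ext <| huniq a a.2 a' a'.2 _ (hft a a.2) (hrf a a.2) (hfa ▸ hrf a' a'.2)
  exact ENat.card_le_card_of_injective hg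

theorem le_equivCatOn {G M : Type*} [Monoid G] [MulAction G M] [TopologicalSpace M]
    {A : Set M} {n : ℕ∞}
    (h : ∀ 𝒰 : Finset (Set M), (∀ U ∈ 𝒰, GCategoricalOn G A U) → A ⊆ ⋃₀ ↑𝒰 → n ≤ 𝒰.card) :
    n ≤ equivCatOn G A :=
  le_sInf <| by
    rintro - ⟨𝒰, ⟨hcat, hcover⟩, rfl⟩
    exact h 𝒰 hcat hcover

section EquivariantCategory

variable {G M : Type*} [Group G] [MulAction G M] [TopologicalSpace M]

namespace GCategoricalOn

variable {A U : Set M}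

theorem exists_mem_connectedComponentIn_fixedPoints (hU : GCategoricalOn G A U) :
    ∃ y, ∀ x ∈ U ∩ fixedPoints G M, y ∈ connectedComponentIn (A ∩ fixedPoints G M) x := by
  obtain ⟨-, -, H, hH0, hHA, hHequiv, y, hH1⟩ := hU
  refine ⟨y, fun x ⟨hxU, hxF⟩ => ?_⟩
  have hpath_fixed (t : ℝ) : H (⟨x, hxU⟩, t) ∈ fixedPoints G M := fun g => by
    have hgx : g • x ∈ U := (hxF g).symm ▸ hxU
    rw [← hHequiv g ⟨x, hxU⟩ hgx t]
    simp only [hxF g]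
  have hend : H (⟨x, hxU⟩, 1) = y :=
    (mem_fixedPoints'.mp (hpath_fixed 1) y (mem_orbit_symm.mp (hH1 ⟨x, hxU⟩))).symm
  have hpath : Continuous fun t : ℝ => H (⟨x, hxU⟩, t) := by fun_prop
  refine (isPreconnected_Icc.image _ hpath.continuousOn).subset_connectedComponentIn
    ⟨0, left_mem_Icc.mpr zero_le_one, hH0 _⟩ ?_ ⟨1, right_mem_Icc.mpr zero_le_one, hend⟩
  rintro - ⟨t, ht, rfl⟩
  exact ⟨hHA _ t ht, hpath_fixed t⟩

theorem connectedComponentIn_fixedPoints_eq (hU : GCategoricalOn G A U) {x₁ x₂ : M}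
    (hx₁ : x₁ ∈ U ∩ fixedPoints G M) (hx₂ : x₂ ∈ U ∩ fixedPoints G M) :
    connectedComponentIn (A ∩ fixedPoints G M) x₁ =
      connectedComponentIn (A ∩ fixedPoints G M) x₂ := by
  obtain ⟨y, hy⟩ := hU.exists_mem_connectedComponentIn_fixedPoints
  rw [connectedComponentIn_eq (hy x₁ hx₁), connectedComponentIn_eq (hy x₂ hx₂)]

end GCategoricalOn

theorem encard_components_inter_fixedPoints_le_equivCatOn (A : Set M) :
    {C : Set M | ∃ x ∈ A ∩ fixedPoints G M,
        C = connectedComponentIn (A ∩ fixedPoints G M) x}.encard ≤ equivCatOn G A := by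
  refine le_equivCatOn fun 𝒰 hcat hcover => ?_
  rw [← encard_coe_eq_coe_finsetCard]
  refine Set.encard_le_encard_of_exists_rel
    (fun C U => ∃ x ∈ U ∩ fixedPoints G M, C = connectedComponentIn (A ∩ fixedPoints G M) x)
    ?_ ?_
  · rintro _ ⟨x, ⟨hxA, hxF⟩, rfl⟩
    obtain ⟨U, hU, hxU⟩ := hcover hxA
    exact ⟨U, hU, x, ⟨hxU, hxF⟩, rfl⟩
  · rintro _ - _ - U hU ⟨x₁, hx₁, rfl⟩ ⟨x₂, hx₂, rfl⟩
    exact (hcat U hU).connectedComponentIn_fixedPoints_eq hx₁ hx₂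

end EquivariantCategory

theorem encard_components_fixedPoints_le_equivCat_general
    {G : Type*} [Group G]
    {M : Type*} [TopologicalSpace M]
    [MulAction G M] :
    {C : Set M | ∃ x ∈ MulAction.fixedPoints G M,
        C = connectedComponentIn (MulAction.fixedPoints G M) x}.encard ≤
      equivCat G M := by
  simpa only [equivCat, univ_inter] using
    encard_components_inter_fixedPoints_le_equivCatOn (G := G) (univ : Set M)

/-- For a proper smooth action of a Lie group `G` on a manifold
`M`, the number of connected components of the fixed point set
`Fix(G) = {x | g • x = x for all g}` is a lower bound for `cat_G(M)`. -/
theorem encard_components_fixedPoints_le_equivCat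
    {EG : Type*} [NormedAddCommGroup EG] [NormedSpace ℝ EG]
    {HG : Type*} [TopologicalSpace HG] (IG : ModelWithCorners ℝ EG HG)
    {G : Type*} [TopologicalSpace G] [ChartedSpace HG G] [Group G] [LieGroup IG (⊤ : ℕ∞) G]
    {EM : Type*} [NormedAddCommGroup EM] [NormedSpace ℝ EM]
    {HM : Type*} [TopologicalSpace HM] (IM : ModelWithCorners ℝ EM HM)
    {M : Type*} [TopologicalSpace M] [ChartedSpace HM M] [IsManifold IM (⊤ : ℕ∞) M]
    [MulAction G M] [ContinuousSMul G M] [ProperSMul G M]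
    (hsmooth : ContMDiff (IG.prod IM) IM (⊤ : ℕ∞) (fun p : G × M => p.1 • p.2)) :
    {C : Set M | ∃ x ∈ MulAction.fixedPoints G M,
        C = connectedComponentIn (MulAction.fixedPoints G M) x}.encard ≤
      equivCat G M :=
  encard_components_fixedPoints_le_equivCat_general
end
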